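/- The limit, as the real number λ tends to 0 from the right, of the complex number (−1/2) · (Γ_ℂ(λ+2)/Γ_ℂ(λ+1)) · (Γ_ℝ(λ+2)/Γ_ℝ(λ)) · (Γ_ℂ(2λ+2)/Γ_ℂ(2λ+1)) · (Γ_ℝ(2λ+2)/Γ_ℝ(2λ+1)) · (Γ_ℂ(λ−1/2)/Γ_ℂ(λ+1)) · (Γ_ℝ(2λ)·Γ_ℝ(2λ+1)/(Γ_ℝ(2λ+3)·Γ_ℝ(2λ−1))) · (Γ_ℂ(λ+1/2)/Γ_ℂ(λ+2)) equals −1. (This is the concluding limit computation in the proof of Proposition 2.9.2 of the paper, combining the normalizing factor ε(0,ρ∘φ_λ,ψ_ℝ)L(1,ρ∘φ_λ)/L(0,ρ∘φ_λ) with the composed integral operators M₂∘M_c∘M₂.) -/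

import Mathlib

/-!
Since `Γ_ℂ(s) = 2^{1-s} Γ_ℝ(2s)`, every factor is a power of `2` times a ratio of values of `Γ_ℝ`
at `s`, `s + 2` or `2s + k` with `-1 ≤ k ≤ 4`. The recurrence `Γ_ℝ(z + 2) = z Γ_ℝ(z) / (2π)`
expresses all of them through `Γ_ℝ(s)`, `Γ_ℝ(2s)` and `Γ_ℝ(2s - 1)`, which cancel; the powers of
two multiply to `8`, and the product is identically `-1` on the strip `0 < Re s < 1/2`. So the
function in the limit is eventually constant as `λ → 0⁺`.
-/

/-- `Γ_ℝ(z) = π^{-z/2} Γ(z/2)`. -/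
noncomputable def GammaR (z : ℂ) : ℂ := (Real.pi : ℂ) ^ (-z / 2) * Complex.Gamma (z / 2)

/-- `Γ_ℂ(z) = 2 (2π)^{-z} Γ(z)`. -/
noncomputable def GammaC (z : ℂ) : ℂ := 2 * ((2 * Real.pi : ℝ) : ℂ) ^ (-z) * Complex.Gamma z

open Complex Real

lemma GammaR_eq_Gammaℝ : GammaR = Gammaℝ := rfl

lemma GammaC_eq_Gammaℂ : GammaC = Gammaℂ := by
  ext s
  simp [GammaC, Gammaℂ_def]

namespace Complex

lemma Gammaℂ_eq_two_cpow_mul_Gammaℝ_two_mul (s : ℂ) :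
    Gammaℂ s = 2 ^ (1 - s) * Gammaℝ (2 * s) := by
  have h2π : (2 * π : ℂ) ^ (-s) = 2 ^ (-s) * π ^ (-s) := by
    simpa using mul_cpow_ofReal_nonneg two_pos.le pi_pos.le (-s)
  rw [Gammaℂ_def, Gammaℝ_def, mul_div_cancel_left₀ _ two_ne_zero, show -(2 * s) / 2 = -s by ring,
    h2π, sub_eq_add_neg, cpow_add _ _ two_ne_zero, cpow_one]
  ring

lemma Gammaℂ_div_Gammaℂ (a b : ℂ) :
    Gammaℂ a / Gammaℂ b = 2 ^ (b - a) * (Gammaℝ (2 * a) / Gammaℝ (2 * b)) := by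
  rw [Gammaℂ_eq_two_cpow_mul_Gammaℝ_two_mul, Gammaℂ_eq_two_cpow_mul_Gammaℝ_two_mul,
    mul_div_mul_comm, ← cpow_sub _ _ two_ne_zero, show 1 - a - (1 - b) = b - a by ring]

lemma Gammaℝ_add_two_div {s : ℂ} (hs : s ≠ 0) (h : Gammaℝ s ≠ 0) :
    Gammaℝ (s + 2) / Gammaℝ s = s / (2 * π) := by
  rw [Gammaℝ_add_two hs]
  field_simp

lemma Gammaℂ_add_one_div {s : ℂ} (hs : s ≠ 0) (h : Gammaℂ s ≠ 0) :
    Gammaℂ (s + 1) / Gammaℂ s = s / (2 * π) := by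
  rw [Gammaℂ_add_one hs]
  field_simp

lemma Gammaℂ_ne_zero_of_re_pos {s : ℂ} (hs : 0 < s.re) : Gammaℂ s ≠ 0 := by
  rw [← Gammaℝ_mul_Gammaℝ_add_one]
  exact mul_ne_zero (Gammaℝ_ne_zero_of_re_pos hs) (Gammaℝ_ne_zero_of_re_pos (by simp; linarith))

lemma Gammaℝ_ne_zero_of_re_mem_Ioo {s : ℂ} (hs : s.re ∈ Set.Ioo (-2) 0) : Gammaℝ s ≠ 0 := by
  rintro h
  obtain ⟨n, rfl⟩ := Gammaℝ_eq_zero_iff.mp h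
  obtain ⟨h₁, h₂⟩ := hs
  rcases n with _ | n
  · simp at h₂
  · simp at h₁
    linarith

lemma two_cpow_three_halves_mul_self : (2 : ℂ) ^ (3 / 2 : ℂ) * 2 ^ (3 / 2 : ℂ) = 8 := by
  rw [← cpow_add _ _ two_ne_zero]
  norm_num

end Complex

theorem gamma_factor_product_eq_neg_one {s : ℂ} (h₀ : 0 < s.re) (h₁ : s.re < 1 / 2) :
    (-(1 / 2) : ℂ) *
          (Gammaℂ (s + 2) / Gammaℂ (s + 1)) *
          (Gammaℝ (s + 2) / Gammaℝ s) *
          (Gammaℂ (2 * s + 2) / Gammaℂ (2 * s + 1)) *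
          (Gammaℝ (2 * s + 2) / Gammaℝ (2 * s + 1)) *
          (Gammaℂ (s - 1 / 2) / Gammaℂ (s + 1)) *
          ((Gammaℝ (2 * s) * Gammaℝ (2 * s + 1)) /
            (Gammaℝ (2 * s + 3) * Gammaℝ (2 * s - 1))) *
          (Gammaℂ (s + 1 / 2) / Gammaℂ (s + 2)) = -1 := by
  have hs : s ≠ 0 := ne_zero_of_re_pos h₀
  have hs₁ : s + 1 ≠ 0 := ne_zero_of_re_pos (by simp; linarith)
  have h2s : 2 * s ≠ 0 := ne_zero_of_re_pos (by simp; linarith)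
  have h2s₁ : 2 * s + 1 ≠ 0 := ne_zero_of_re_pos (by simp; linarith)
  have h2s₂ : 2 * s + 2 ≠ 0 := ne_zero_of_re_pos (by simp; linarith)
  have h2s_sub : 2 * s - 1 ≠ 0 := fun h ↦ by have := congrArg re h; simp at this; linarith
  have hΓ2s : Gammaℝ (2 * s) ≠ 0 := Gammaℝ_ne_zero_of_re_pos (by simp; linarith)
  have hΓ2s_sub : Gammaℝ (2 * s - 1) ≠ 0 :=
    Gammaℝ_ne_zero_of_re_mem_Ioo ⟨by simp; linarith, by simp; linarith⟩
  have hC₁ : Gammaℂ (s + 2) / Gammaℂ (s + 1) = (s + 1) / (2 * π) := by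
    rw [show s + 2 = s + 1 + 1 by ring]
    exact Gammaℂ_add_one_div hs₁ (Gammaℂ_ne_zero_of_re_pos (by simp; linarith))
  have hC₂ : Gammaℂ (2 * s + 2) / Gammaℂ (2 * s + 1) = (2 * s + 1) / (2 * π) := by
    rw [show 2 * s + 2 = 2 * s + 1 + 1 by ring]
    exact Gammaℂ_add_one_div h2s₁ (Gammaℂ_ne_zero_of_re_pos (by simp; linarith))
  have hC₃ : Gammaℂ (s - 1 / 2) / Gammaℂ (s + 1) =
      2 ^ (3 / 2 : ℂ) * (Gammaℝ (2 * s - 1) / Gammaℝ (2 * s + 2)) := by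
    rw [Gammaℂ_div_Gammaℂ]
    ring_nf
  have hC₄ : Gammaℂ (s + 1 / 2) / Gammaℂ (s + 2) =
      2 ^ (3 / 2 : ℂ) * (Gammaℝ (2 * s + 1) / Gammaℝ (2 * s + 2 + 2)) := by
    rw [Gammaℂ_div_Gammaℂ]
    ring_nf
  have hR : Gammaℝ (2 * s + 1) = Gammaℝ (2 * s - 1) * (2 * s - 1) / 2 / π := by
    rw [← Gammaℝ_add_two h2s_sub]
    ring_nf
  rw [hC₁, Gammaℝ_add_two_div hs (Gammaℝ_ne_zero_of_re_pos h₀), hC₂, hC₃, hC₄,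
    show 2 * s + 3 = 2 * s + 1 + 2 by ring, Gammaℝ_add_two h2s₂, Gammaℝ_add_two h2s₁,
    Gammaℝ_add_two h2s, hR]
  have hsq := two_cpow_three_halves_mul_self
  generalize (2 : ℂ) ^ (3 / 2 : ℂ) = t at hsq ⊢
  field_simp
  linear_combination -hsq

/-- As `λ → 0⁺` (λ real), the displayed product of Gamma factors tends to `−1`. -/
theorem stmt5 :
    Filter.Tendsto
      (fun l : ℝ =>
        (-(1 / 2) : ℂ) *
          (GammaC ((l : ℂ) + 2) / GammaC ((l : ℂ) + 1)) *
          (GammaR ((l : ℂ) + 2) / GammaR (l : ℂ)) *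
          (GammaC (2 * (l : ℂ) + 2) / GammaC (2 * (l : ℂ) + 1)) *
          (GammaR (2 * (l : ℂ) + 2) / GammaR (2 * (l : ℂ) + 1)) *
          (GammaC ((l : ℂ) - 1 / 2) / GammaC ((l : ℂ) + 1)) *
          ((GammaR (2 * (l : ℂ)) * GammaR (2 * (l : ℂ) + 1)) /
            (GammaR (2 * (l : ℂ) + 3) * GammaR (2 * (l : ℂ) - 1))) *
          (GammaC ((l : ℂ) + 1 / 2) / GammaC ((l : ℂ) + 2)))
      (nhdsWithin 0 (Set.Ioi 0)) (nhds (-1)) := by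
  rw [GammaR_eq_Gammaℝ, GammaC_eq_Gammaℂ]
  refine tendsto_const_nhds.congr' ?_
  filter_upwards [Ioo_mem_nhdsGT (show (0 : ℝ) < 1 / 2 by norm_num)] with l hl
  exact (gamma_factor_product_eq_neg_one (by simpa using hl.1) (by simpa using hl.2)).symm
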